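/- arXiv:2403.19074 — 3 statements merged into one kernel-verified Lean document; each statement's English description precedes it below -/
import Mathlib

section
/- For a vector z ∈ ℝⁿ and an integer K with 0 ≤ K ≤ n, the cardinality constraint ‖z‖₀ ≤ K (i.e., the number of nonzero entries of z is at most K) holds if and only if there exists u ∈ [0,1]ⁿ such that ∑_{i=1}^n u_i ≥ n − K and u_i · z_i = 0 for all i. -/
/-- Cardinality constraint `‖z‖₀ ≤ K` holds iff there is `u ∈ [0,1]ⁿ` with
`∑ u_i ≥ n - K` and `u_i z_i = 0` for all `i`. -/
theorem card_constraint_iff_relaxed (n K : ℕ) (hK : K ≤ n) (z : Fin n → ℝ) :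
    (Finset.univ.filter (fun i => z i ≠ 0)).card ≤ K ↔
      ∃ u : Fin n → ℝ, (∀ i, u i ∈ Set.Icc (0 : ℝ) 1) ∧
        (n : ℝ) - K ≤ ∑ i, u i ∧ ∀ i, u i * z i = 0 := by
  constructor
  · intro h
    refine ⟨fun i => if z i = 0 then 1 else 0, ?_, ?_, ?_⟩
    · intro i; by_cases hz : z i = 0 <;> simp [hz]
    · have hsum : ∑ i, (if z i = 0 then (1:ℝ) else 0) =
          ((Finset.univ.filter (fun i => z i = 0)).card : ℝ) := by
        rw [Finset.sum_boole]
      rw [hsum]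
      have hcomp : (Finset.univ.filter (fun i => z i = 0)).card
          = n - (Finset.univ.filter (fun i => z i ≠ 0)).card := by
        have := Finset.card_filter_add_card_filter_not
          (s := (Finset.univ : Finset (Fin n))) (p := fun i => z i = 0)
        simp only [ne_eq, Finset.card_univ, Fintype.card_fin] at this ⊢
        omega
      rw [hcomp]
      have hle : (Finset.univ.filter (fun i => z i ≠ 0)).card ≤ n :=
        le_trans (Finset.card_filter_le _ _) (by simp)
      push_cast [Nat.cast_sub hle]
      have : ((Finset.univ.filter (fun i => z i ≠ 0)).card : ℝ) ≤ (K : ℝ) := by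
        exact_mod_cast h
      linarith
    · intro i; by_cases hz : z i = 0 <;> simp [hz]
  · rintro ⟨u, hu, hsum, hz⟩
    have key : ∑ i, u i ≤ ((Finset.univ.filter (fun i => z i = 0)).card : ℝ) := by
      calc ∑ i, u i ≤ ∑ i, (if z i = 0 then (1:ℝ) else 0) := by
            apply Finset.sum_le_sum
            intro i _
            by_cases hzi : z i = 0
            · simp [hzi, (hu i).2]
            · have : u i = 0 := by
                have := hz i
                rcases mul_eq_zero.mp this with h | h
                · exact h
                · exact absurd h hzi
              simp [hzi, this]
        _ = _ := by rw [Finset.sum_boole]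
    have hcomp : (Finset.univ.filter (fun i => z i = 0)).card
        = n - (Finset.univ.filter (fun i => z i ≠ 0)).card := by
      have := Finset.card_filter_add_card_filter_not
        (s := (Finset.univ : Finset (Fin n))) (p := fun i => z i = 0)
      simp only [ne_eq, Finset.card_univ, Fintype.card_fin] at this ⊢
      omega
    have hle : (Finset.univ.filter (fun i => z i ≠ 0)).card ≤ n :=
      le_trans (Finset.card_filter_le _ _) (by simp)
    have : (n : ℝ) - K ≤ (n : ℝ) - (Finset.univ.filter (fun i => z i ≠ 0)).card := by
      rw [hcomp] at key
      push_cast [Nat.cast_sub hle] at key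
      linarith
    have : ((Finset.univ.filter (fun i => z i ≠ 0)).card : ℝ) ≤ (K : ℝ) := by linarith
    exact_mod_cast this
end

section
/- Let X ⊆ ℝᵖ be closed, let f : ℝᵖ × ℝ^q → ℝ be continuous, and let Y : X ⇉ ℝ^q be a set-valued map that is lower semicontinuous with closed graph. Then the solution map S : X ⇉ ℝ^q defined by S(x) = {y ∈ Y(x) : f(x,y) ≤ f(x,z) for all z ∈ Y(x)} has closed graph. -/
/-- The argmin (solution) map of a parametric optimization problem with continuous
objective and a lower semicontinuous, closed-graph feasibility map has closed graph. -/
theorem solution_map_closed_graph (p q : ℕ) (X : Set (Fin p → ℝ)) (hX : IsClosed X)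
    (f : (Fin p → ℝ) → (Fin q → ℝ) → ℝ) (hf : Continuous fun xy : (Fin p → ℝ) × (Fin q → ℝ) => f xy.1 xy.2)
    (Y : (Fin p → ℝ) → Set (Fin q → ℝ))
    (hYlsc : ∀ x₀ ∈ X, ∀ V : Set (Fin q → ℝ), IsOpen V → (Y x₀ ∩ V).Nonempty →
      ∃ U ∈ nhds x₀, ∀ x ∈ U ∩ X, (Y x ∩ V).Nonempty)
    (hYclosed : IsClosed {xy : (Fin p → ℝ) × (Fin q → ℝ) | xy.1 ∈ X ∧ xy.2 ∈ Y xy.1}) :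
    IsClosed {xy : (Fin p → ℝ) × (Fin q → ℝ) |
      xy.1 ∈ X ∧ xy.2 ∈ Y xy.1 ∧ ∀ z ∈ Y xy.1, f xy.1 xy.2 ≤ f xy.1 z} := by
  apply IsSeqClosed.isClosed
  intro u w hu hconv
  -- limit is in the graph of Y
  have hgraph : w.1 ∈ X ∧ w.2 ∈ Y w.1 :=
    hYclosed.isSeqClosed (fun n => ⟨(hu n).1, (hu n).2.1⟩) hconv
  refine ⟨hgraph.1, hgraph.2, ?_⟩
  intro z hz
  by_contra hlt
  push_neg at hlt
  set ε : ℝ := (f w.1 w.2 - f w.1 z) / 2 with hε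
  have hεpos : 0 < ε := by simp [hε]; linarith
  -- neighborhood where f is close to f w.1 z
  have hA : {ab : (Fin p → ℝ) × (Fin q → ℝ) | f ab.1 ab.2 < f w.1 z + ε} ∈ nhds (w.1, z) := by
    apply IsOpen.mem_nhds
    · exact isOpen_lt hf continuous_const
    · simpa using hεpos
  rw [nhds_prod_eq, Filter.mem_prod_iff] at hA
  obtain ⟨Ux, hUx, Vz, hVz, hUV⟩ := hA
  obtain ⟨V, hVsub, hVopen, hzV⟩ := mem_nhds_iff.mp hVz
  -- neighborhood where f is close to f w.1 w.2
  have hB : {ab : (Fin p → ℝ) × (Fin q → ℝ) | f w.1 w.2 - ε < f ab.1 ab.2} ∈ nhds w := by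
    apply IsOpen.mem_nhds
    · exact isOpen_lt continuous_const hf
    · simp [hεpos]
  -- lsc gives U
  obtain ⟨U, hU, hUprop⟩ := hYlsc w.1 hgraph.1 V hVopen ⟨z, hz, hzV⟩
  -- eventually conditions
  have h1 : ∀ᶠ n in Filter.atTop, u n ∈ {ab : (Fin p → ℝ) × (Fin q → ℝ) | f w.1 w.2 - ε < f ab.1 ab.2} :=
    hconv.eventually_mem hB
  have h2 : ∀ᶠ n in Filter.atTop, (u n).1 ∈ U ∩ Ux := by
    have : Filter.Tendsto (fun n => (u n).1) Filter.atTop (nhds w.1) :=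
      (continuous_fst.tendsto w).comp hconv
    exact this.eventually_mem (Filter.inter_mem hU hUx)
  obtain ⟨n, hn1, hn2⟩ := (h1.and h2).exists
  obtain ⟨z', hz'Y, hz'V⟩ := hUprop (u n).1 ⟨hn2.1, (hu n).1⟩
  have hA' : f (u n).1 z' < f w.1 z + ε := hUV (Set.mk_mem_prod hn2.2 (hVsub hz'V))
  have hmin : f (u n).1 (u n).2 ≤ f (u n).1 z' := (hu n).2.2 z' hz'Y
  have : f w.1 w.2 - ε < f w.1 z + ε := lt_of_lt_of_le (lt_of_lt_of_le hn1 hmin) hA'.le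
  rw [hε] at this
  linarith
end

section
/- In the two-follower parametric game where, given x ∈ [1,2], follower 1 solves min{y₁ : x ≤ 2y₁, y₁ ∈ [0,1]} and follower 2 solves min{−y₂ : y₂ ≤ y₁, y₂ ∈ [0,1]}, the unique Nash equilibrium is (y₁, y₂) = (x/2, x/2). Consequently, for every x ∈ [1,2] the equilibrium y satisfies ‖y‖₀ = 2 > 1, so the leader's problem with constraint ‖y‖₀ ≤ 1 is infeasible. -/
/-- In the two-follower example, for each `x ∈ [1,2]` the unique Nash equilibrium is
`(x/2, x/2)`; every equilibrium has both entries nonzero, so the cardinality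
constraint `‖y‖₀ ≤ 1` makes the leader's problem infeasible. -/
theorem example_infeasibility (x : ℝ) (hx : x ∈ Set.Icc (1 : ℝ) 2) (y₁ y₂ : ℝ) :
    (((y₁ ∈ Set.Icc (0 : ℝ) 1 ∧ x ≤ 2 * y₁ ∧
        ∀ z ∈ Set.Icc (0 : ℝ) 1, x ≤ 2 * z → y₁ ≤ z) ∧
      (y₂ ∈ Set.Icc (0 : ℝ) 1 ∧ y₂ ≤ y₁ ∧
        ∀ z ∈ Set.Icc (0 : ℝ) 1, z ≤ y₁ → -y₂ ≤ -z)) ↔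
      (y₁ = x / 2 ∧ y₂ = x / 2)) ∧
    (((y₁ ∈ Set.Icc (0 : ℝ) 1 ∧ x ≤ 2 * y₁ ∧
        ∀ z ∈ Set.Icc (0 : ℝ) 1, x ≤ 2 * z → y₁ ≤ z) ∧
      (y₂ ∈ Set.Icc (0 : ℝ) 1 ∧ y₂ ≤ y₁ ∧
        ∀ z ∈ Set.Icc (0 : ℝ) 1, z ≤ y₁ → -y₂ ≤ -z)) →
      ¬ ((Finset.univ.filter (fun i => ![y₁, y₂] i ≠ 0)).card ≤ 1)) := by
  obtain ⟨hx1, hx2⟩ := hx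
  have key : (((y₁ ∈ Set.Icc (0 : ℝ) 1 ∧ x ≤ 2 * y₁ ∧
        ∀ z ∈ Set.Icc (0 : ℝ) 1, x ≤ 2 * z → y₁ ≤ z) ∧
      (y₂ ∈ Set.Icc (0 : ℝ) 1 ∧ y₂ ≤ y₁ ∧
        ∀ z ∈ Set.Icc (0 : ℝ) 1, z ≤ y₁ → -y₂ ≤ -z)) ↔
      (y₁ = x / 2 ∧ y₂ = x / 2)) := by
    constructor
    · rintro ⟨⟨⟨h0, h1⟩, hxy, hmin⟩, ⟨⟨g0, g1⟩, hle, hmax⟩⟩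
      have h1' : y₁ ≤ x / 2 := by
        have := hmin (x / 2) ⟨by linarith, by linarith⟩ (by linarith)
        linarith
      have hy1 : y₁ = x / 2 := le_antisymm h1' (by linarith)
      have h2' : y₁ ≤ y₂ := by
        have := hmax y₁ ⟨h0, h1⟩ le_rfl
        linarith
      exact ⟨hy1, le_antisymm (hy1 ▸ hle) (hy1 ▸ h2')⟩
    · rintro ⟨h1, h2⟩
      subst h1; subst h2
      refine ⟨⟨⟨by linarith, by linarith⟩, by linarith,
        fun z hz hzx => by linarith⟩,
        ⟨⟨by linarith, by linarith⟩, le_rfl, fun z hz hzy => by linarith⟩⟩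
  refine ⟨key, fun h => ?_⟩
  obtain ⟨h1, h2⟩ := key.mp h
  have hy1 : y₁ ≠ 0 := by rw [h1]; positivity
  have hy2 : y₂ ≠ 0 := by rw [h2]; positivity
  intro hc
  have : (Finset.univ.filter (fun i => ![y₁, y₂] i ≠ 0)) = Finset.univ := by
    apply Finset.eq_univ_of_forall
    intro i
    fin_cases i <;> simp [hy1, hy2]
  rw [this] at hc
  simp [Finset.card_univ] at hc
end
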